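/- For every multiindex ν ∈ ℕ₀^d, the double sum ∑_{0 < m < ν} ∑_{0 ≤ ℓ ≤ m} C(ν,m) · C(m,ℓ) · |(1/2)_{|ν−m|}| · |(1/2)_{|m−ℓ|}| · |(1/2)_{|ℓ|}| ≤ 8 · |(1/2)_{|ν|}|. -/

import Mathlib

/-- The absolute value of the falling factorial `(1/2)_n`. -/
noncomputable def ff (n : ℕ) : ℝ := |(descPochhammer ℝ n).eval (1/2 : ℝ)|

/-!
The falling factorials `a k = (1/2)_k` alternate in sign, `a k = (-1)^(k+1) ff k` for `k ≥ 1`,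
so in the Chu–Vandermonde identity `(1)_n = ∑ C(n,k) a k a (n-k)` every interior term carries
the same sign `(-1)^n`. Since `(1)_n = 0` for `n ≥ 2`, this gives
`∑_k C(n,k) ff k ff (n-k) = 4 ff n`, and `≤ 4 ff n` for all `n`. The multi-index Vandermonde
identity `∑_{|ℓ| = k, ℓ ≤ m} C(m,ℓ) = C(|m|,k)` reduces the inner sum over `ℓ` to this
one-dimensional bound, giving `4 ff |m|`; the outer sum over `0 < m < ν` is the full sum over
`m ≤ ν`, which is at most `4 ff |ν|`, minus the two endpoint terms `ff |ν|` each.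
-/

open Finset Polynomial

section MultiVandermonde

variable {ι : Type*} [Fintype ι] [DecidableEq ι]

lemma mem_piFinset_range_succ_iff {m l : ι → ℕ} :
    l ∈ Fintype.piFinset (fun j => range (m j + 1)) ↔ l ≤ m := by
  simp [Fintype.mem_piFinset, Pi.le_def]

lemma sum_piFinset_C_prod_choose_mul_X_pow (m : ι → ℕ) :
    ∑ l ∈ Fintype.piFinset (fun j => range (m j + 1)),
      C (∏ j, (m j).choose (l j)) * (X : ℕ[X]) ^ (∑ j, l j) = (X + 1) ^ (∑ j, m j) := by
  simp_rw [← prod_pow_eq_pow_sum, add_pow, one_pow, mul_one, prod_univ_sum, map_prod,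
    ← prod_mul_distrib]
  refine sum_congr rfl fun l _ => prod_congr rfl fun j _ => ?_
  rw [mul_comm]
  rfl

lemma sum_prod_choose_filter_sum_eq (m : ι → ℕ) (k : ℕ) :
    ∑ l ∈ Fintype.piFinset (fun j => range (m j + 1)) with ∑ j, l j = k,
      ∏ j, (m j).choose (l j) = (∑ j, m j).choose k := by
  have h := congrArg (coeff · k) (sum_piFinset_C_prod_choose_mul_X_pow m)
  simp only [finsetSum_coeff, coeff_C_mul_X_pow, coeff_X_add_one_pow, Nat.cast_id] at h
  rw [← h, sum_filter]
  exact sum_congr rfl fun l _ => by simp only [eq_comm]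

lemma sum_piFinset_prod_choose_mul {R : Type*} [CommSemiring R] (m : ι → ℕ) (g : ℕ → R) :
    ∑ l ∈ Fintype.piFinset (fun j => range (m j + 1)),
      (∏ j, ((m j).choose (l j) : R)) * g (∑ j, l j)
    = ∑ k ∈ range (∑ j, m j + 1), ((∑ j, m j).choose k : R) * g k := by
  have hmaps : ∀ l ∈ Fintype.piFinset (fun j => range (m j + 1)),
      ∑ j, l j ∈ range (∑ j, m j + 1) := fun l hl =>
    mem_range_succ_iff.mpr (sum_le_sum fun j _ => mem_piFinset_range_succ_iff.mp hl j)
  rw [← sum_fiberwise_of_maps_to hmaps]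
  refine sum_congr rfl fun k _ => ?_
  rw [← sum_prod_choose_filter_sum_eq m k, Nat.cast_sum, sum_mul]
  refine sum_congr rfl fun l hl => ?_
  rw [(mem_filter.mp hl).2, Nat.cast_prod]

end MultiVandermonde

lemma descPochhammer_eval_add {R : Type*} [CommRing R] (n : ℕ) (x y : R) :
    (descPochhammer R n).eval (x + y) = ∑ ij ∈ antidiagonal n,
      (n.choose ij.1 : R) * ((descPochhammer R ij.1).eval x * (descPochhammer R ij.2).eval y) := by
  simp only [← descPochhammer_map (algebraMap ℤ R), eval_map, ← aeval_def, aeval_eq_smeval]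
  exact Ring.descPochhammer_smeval_add n (Commute.all x y)

lemma ff_zero : ff 0 = 1 := by simp [ff]

lemma ff_nonneg (n : ℕ) : 0 ≤ ff n := abs_nonneg _

lemma neg_one_pow_mul_descPochhammer_eval_half_nonneg {n : ℕ} (hn : n ≠ 0) :
    0 ≤ (-1) ^ (n + 1) * (descPochhammer ℝ n).eval (1/2 : ℝ) := by
  induction n, Nat.one_le_iff_ne_zero.mpr hn using Nat.le_induction with
  | base => norm_num
  | succ n hn1 ih =>
    have hn' : (1 : ℝ) ≤ n := by exact_mod_cast hn1
    rw [descPochhammer_succ_eval]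
    calc (0 : ℝ) ≤ (-1) ^ (n + 1) * (descPochhammer ℝ n).eval (1/2 : ℝ) * (n - 1/2) :=
          mul_nonneg (ih (by omega)) (by linarith)
      _ = _ := by ring

lemma ff_eq_neg_one_pow_mul {n : ℕ} (hn : n ≠ 0) :
    ff n = (-1) ^ (n + 1) * (descPochhammer ℝ n).eval (1/2 : ℝ) := by
  rw [← abs_of_nonneg (neg_one_pow_mul_descPochhammer_eval_half_nonneg hn), abs_mul, abs_pow,
    abs_neg, abs_one, one_pow, one_mul, ff]

lemma sum_antidiagonal_choose_mul_ff {n : ℕ} (hn : n ≠ 0) :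
    ∑ ij ∈ antidiagonal n, (n.choose ij.1 : ℝ) * (ff ij.2 * ff ij.1)
      = 4 * ff n + (-1) ^ n * (descPochhammer ℝ n).eval 1 := by
  have hV := descPochhammer_eval_add n (1/2 : ℝ) (1/2)
  rw [add_halves] at hV
  rw [hV, mul_sum, ← sub_eq_iff_eq_add, ← sum_sub_distrib]
  rw [sum_eq_add_of_mem (0, n) (n, 0) (by simp) (by simp) (by simp [hn])]
  · simp only [Nat.choose_zero_right, Nat.choose_self, ff_zero, descPochhammer_zero, eval_one,
      ff_eq_neg_one_pow_mul hn]
    ring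
  · rintro ⟨i, j⟩ hij ⟨h0, hn0⟩
    obtain rfl : i + j = n := mem_antidiagonal.mp hij
    have hi : i ≠ 0 := by rintro rfl; simp at h0
    have hj : j ≠ 0 := by rintro rfl; simp at hn0
    simp only [ff_eq_neg_one_pow_mul hi, ff_eq_neg_one_pow_mul hj]
    ring

lemma sum_range_choose_mul_ff_le (n : ℕ) :
    ∑ k ∈ range (n + 1), (n.choose k : ℝ) * (ff (n - k) * ff k) ≤ 4 * ff n := by
  rcases Nat.eq_zero_or_pos n with rfl | hn
  · norm_num [ff_zero]
  rw [← Nat.sum_antidiagonal_eq_sum_range_succ (fun i j => (n.choose i : ℝ) * (ff j * ff i)),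
    sum_antidiagonal_choose_mul_ff hn.ne', add_le_iff_nonpos_right]
  rcases Nat.lt_or_ge n 2 with hn1 | hn2
  · obtain rfl : n = 1 := by omega
    norm_num
  · rw [← Nat.cast_one, descPochhammer_eval_eq_descFactorial,
      Nat.descFactorial_eq_zero_iff_lt.mpr hn2]
    simp

section MultiIndex

variable {ι : Type*} [Fintype ι] [DecidableEq ι]

lemma sum_piFinset_choose_mul_ff_le (m : ι → ℕ) :
    ∑ l ∈ Fintype.piFinset (fun j => range (m j + 1)),
      (∏ j, ((m j).choose (l j) : ℝ)) * (ff (∑ j, (m j - l j)) * ff (∑ j, l j))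
      ≤ 4 * ff (∑ j, m j) := by
  calc _ = ∑ l ∈ Fintype.piFinset (fun j => range (m j + 1)),
        (∏ j, ((m j).choose (l j) : ℝ)) * (ff (∑ j, m j - ∑ j, l j) * ff (∑ j, l j)) := by
        refine sum_congr rfl fun l hl => ?_
        rw [sum_tsub_distrib _ fun j _ => mem_piFinset_range_succ_iff.mp hl j]
    _ = ∑ k ∈ range (∑ j, m j + 1), ((∑ j, m j).choose k : ℝ) * (ff (∑ j, m j - k) * ff k) :=
        sum_piFinset_prod_choose_mul m fun k => ff (∑ j, m j - k) * ff k
    _ ≤ 4 * ff (∑ j, m j) := sum_range_choose_mul_ff_le _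

lemma sum_filter_ne_zero_ne_choose_mul_ff_le (ν : ι → ℕ) :
    ∑ m ∈ Fintype.piFinset (fun j => range (ν j + 1)) with m ≠ 0 ∧ m ≠ ν,
      (∏ j, ((ν j).choose (m j) : ℝ)) * (ff (∑ j, (ν j - m j)) * ff (∑ j, m j))
      ≤ 2 * ff (∑ j, ν j) := by
  set box := Fintype.piFinset fun j => range (ν j + 1)
  set F : (ι → ℕ) → ℝ := fun m =>
    (∏ j, ((ν j).choose (m j) : ℝ)) * (ff (∑ j, (ν j - m j)) * ff (∑ j, m j))
  rcases eq_or_ne ν 0 with rfl | hν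
  · rw [filter_false_of_mem fun m hm h =>
      h.1 (le_antisymm (mem_piFinset_range_succ_iff.mp hm) fun _ => Nat.zero_le _)]
    simpa using ff_nonneg _
  have hsplit : ∑ m ∈ box with m ≠ 0 ∧ m ≠ ν, F m + F ν + F 0 = ∑ m ∈ box, F m := by
    have hνbox : ν ∈ box := mem_piFinset_range_succ_iff.mpr le_rfl
    have h0box : 0 ∈ box.erase ν :=
      mem_erase.mpr ⟨hν.symm, mem_piFinset_range_succ_iff.mpr fun _ => Nat.zero_le _⟩
    have hS : {m ∈ box | m ≠ 0 ∧ m ≠ ν} = (box.erase ν).erase 0 := by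
      ext m; simp only [mem_filter, mem_erase]; tauto
    rw [← add_sum_erase box F hνbox, ← add_sum_erase _ F h0box, hS]
    ring
  have hF0 : F 0 = ff (∑ j, ν j) := by simp [F, ff_zero]
  have hFν : F ν = ff (∑ j, ν j) := by simp [F, ff_zero]
  linarith [sum_piFinset_choose_mul_ff_le ν]

end MultiIndex

theorem stmt13 (d : ℕ) (ν : Fin d → ℕ) :
    ∑ m ∈ (Fintype.piFinset fun j => Finset.range (ν j + 1)).filter
        (fun m => m ≠ 0 ∧ m ≠ ν),
      ∑ l ∈ Fintype.piFinset fun j => Finset.range (m j + 1),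
        (∏ j, ((ν j).choose (m j) : ℝ)) * (∏ j, ((m j).choose (l j) : ℝ))
          * ff (∑ j, (ν j - m j)) * ff (∑ j, (m j - l j)) * ff (∑ j, l j)
      ≤ 8 * ff (∑ j, ν j) := by
  set S := (Fintype.piFinset fun j => range (ν j + 1)).filter (fun m => m ≠ 0 ∧ m ≠ ν)
  calc _ = ∑ m ∈ S, (∏ j, ((ν j).choose (m j) : ℝ)) * ff (∑ j, (ν j - m j)) *
          ∑ l ∈ Fintype.piFinset fun j => range (m j + 1),
            (∏ j, ((m j).choose (l j) : ℝ)) * (ff (∑ j, (m j - l j)) * ff (∑ j, l j)) := by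
        simp only [mul_sum]
        exact sum_congr rfl fun m _ => sum_congr rfl fun l _ => by ring
    _ ≤ ∑ m ∈ S, (∏ j, ((ν j).choose (m j) : ℝ)) * ff (∑ j, (ν j - m j)) *
          (4 * ff (∑ j, m j)) := by
        gcongr with m
        · exact mul_nonneg (prod_nonneg fun j _ => Nat.cast_nonneg _) (ff_nonneg _)
        · exact sum_piFinset_choose_mul_ff_le m
    _ = 4 * ∑ m ∈ S, (∏ j, ((ν j).choose (m j) : ℝ)) *
          (ff (∑ j, (ν j - m j)) * ff (∑ j, m j)) := by
        rw [mul_sum]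
        exact sum_congr rfl fun m _ => by ring
    _ ≤ 4 * (2 * ff (∑ j, ν j)) := by gcongr; exact sum_filter_ne_zero_ne_choose_mul_ff_le ν
    _ = 8 * ff (∑ j, ν j) := by ring
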